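/- Let t ≥ 1 and let G be a finite simple graph whose adjacency matrix has spectrum {(4t+1)^1, (2t−1)^{2t}, (−1)^{(t+1)^2}, (−3)^{t^2}}. If C is a clique in G of order c, then c ≤ 2t+2. Moreover, if c = 2t+2, then every vertex of G outside C has exactly 2 neighbors in C. -/

import Mathlib

open Polynomial Matrix SimpleGraph

/-- The `n × n`-grid: the Cartesian (box) product of two complete graphs on `Fin n`.
Vertices are pairs `(i, j)`, two distinct vertices being adjacent iff they agree in
exactly one coordinate. -/
def gridGraph (n : ℕ) : SimpleGraph (Fin n × Fin n) :=
  (⊤ : SimpleGraph (Fin n)) □ (⊤ : SimpleGraph (Fin n))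

/-- The `q`-clique extension of a graph `G`: the graph on `V × Fin q` in which `(x, i)`
and `(y, j)` are adjacent iff `x` and `y` are adjacent in `G`, or `x = y` and `i ≠ j`. -/
def cliqueExt {V : Type*} (q : ℕ) (G : SimpleGraph V) : SimpleGraph (V × Fin q) where
  Adj a b := G.Adj a.1 b.1 ∨ (a.1 = b.1 ∧ a.2 ≠ b.2)
  symm := by
    refine ⟨?_⟩
    rintro ⟨x, i⟩ ⟨y, j⟩ (h | ⟨h, hij⟩)
    · exact Or.inl h.symm
    · exact Or.inr ⟨h.symm, hij.symm⟩
  loopless := by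
    refine ⟨?_⟩
    rintro ⟨x, i⟩ (h | ⟨-, hij⟩)
    · exact G.irrefl h
    · exact hij rfl

instance cliqueExtAdjDec {V : Type*} (q : ℕ) (G : SimpleGraph V) [DecidableRel G.Adj]
    [DecidableEq V] : DecidableRel (cliqueExt q G).Adj :=
  fun a b => inferInstanceAs (Decidable (G.Adj a.1 b.1 ∨ (a.1 = b.1 ∧ a.2 ≠ b.2)))

instance boxProdAdjDec {α β : Type*} (G : SimpleGraph α) (H : SimpleGraph β)
    [DecidableRel G.Adj] [DecidableRel H.Adj] [DecidableEq α] [DecidableEq β] :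
    DecidableRel (G □ H).Adj :=
  fun x y => inferInstanceAs (Decidable (G.Adj x.1 y.1 ∧ x.2 = y.2 ∨ H.Adj x.2 y.2 ∧ x.1 = y.1))

instance gridAdjDec (n : ℕ) : DecidableRel (gridGraph n).Adj := by
  unfold gridGraph; infer_instance

/-!
The spectrum forces `G` to be regular of degree `θ = 4t+1` on `n = 2(t+1)²` vertices: the degree
sum is `tr A² = ∑ θᵢ² = nθ` and `θ` is the largest eigenvalue, so the all-ones vector is a
`θ`-eigenvector. As `θ` is simple and all other eigenvalues are at most `μ = 2t-1`, the matrix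
`μI - A + (θ - μ)/n • J` is positive semidefinite. Its quadratic form at the characteristic vector
`χ` of a `c`-clique is `μc - c(c-1) + c²/(t+1) ≥ 0`, i.e. `c ≤ 2t+2`. For `c = 2t+2` the form
vanishes at `χ`, so the matrix kills `χ`, and its entry at a vertex `x ∉ K` says that `x` has
`c/(t+1) = 2` neighbours in `K`.
-/

namespace Matrix.IsHermitian

lemma smul_one_sub {n : Type*} [DecidableEq n] {A : Matrix n n ℝ} (hA : A.IsHermitian) (θ : ℝ) :
    (θ • 1 - A).IsHermitian :=
  (isHermitian_one.smul (IsSelfAdjoint.all θ)).sub hA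

variable {n : Type*} [Fintype n] [DecidableEq n] {A : Matrix n n ℝ} (hA : A.IsHermitian)

noncomputable def eigenCoords (x : n → ℝ) : n → ℝ :=
  star (hA.eigenvectorUnitary : Matrix n n ℝ) *ᵥ x

lemma eigenCoords_dotProduct_eigenCoords (x y : n → ℝ) :
    hA.eigenCoords x ⬝ᵥ hA.eigenCoords y = x ⬝ᵥ y := by
  rw [eigenCoords, eigenCoords, dotProduct_mulVec, star_eq_conjTranspose,
    conjTranspose_eq_transpose_of_trivial, ← vecMul_transpose, vecMul_vecMul, transpose_transpose,
    ← conjTranspose_eq_transpose_of_trivial, ← star_eq_conjTranspose,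
    Unitary.mul_star_self_of_mem hA.eigenvectorUnitary.2, vecMul_one]

lemma eigenCoords_injective : Function.Injective hA.eigenCoords := by
  intro x y h
  simpa [eigenCoords, mulVec_mulVec] using congrArg ((hA.eigenvectorUnitary : Matrix n n ℝ) *ᵥ ·) h

lemma eigenCoords_mulVec (x : n → ℝ) (i : n) :
    hA.eigenCoords (A *ᵥ x) i = hA.eigenvalues i * hA.eigenCoords x i := by
  have h := hA.conjStarAlgAut_star_eigenvectorUnitary
  rw [Unitary.conjStarAlgAut_star_apply] at h
  have hU : star (hA.eigenvectorUnitary : Matrix n n ℝ) * A =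
      diagonal hA.eigenvalues * star (hA.eigenvectorUnitary : Matrix n n ℝ) := by
    rw [← Function.id_comp hA.eigenvalues, ← RCLike.ofReal_real_eq_id, ← h,
      Matrix.mul_assoc _ _ (star _), Unitary.mul_star_self_of_mem hA.eigenvectorUnitary.2,
      Matrix.mul_one]
  rw [eigenCoords, eigenCoords, mulVec_mulVec, hU, ← mulVec_mulVec, mulVec_diagonal]

lemma dotProduct_mulVec_eq_sum (x y : n → ℝ) :
    x ⬝ᵥ (A *ᵥ y) = ∑ i, hA.eigenvalues i * (hA.eigenCoords x i * hA.eigenCoords y i) := by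
  rw [← hA.eigenCoords_dotProduct_eigenCoords, dotProduct]
  exact Finset.sum_congr rfl fun i _ => by rw [eigenCoords_mulVec]; ring

lemma eigenCoords_eq_zero_of_mulVec_eq_smul {v : n → ℝ} {θ : ℝ} (hv : A *ᵥ v = θ • v) {i : n}
    (hi : hA.eigenvalues i ≠ θ) : hA.eigenCoords v i = 0 := by
  have h := hA.eigenCoords_mulVec v i
  rw [hv, eigenCoords, mulVec_smul, ← eigenCoords, Pi.smul_apply, smul_eq_mul] at h
  exact (mul_eq_mul_right_iff.mp h.symm).resolve_left hi

lemma eigenCoords_ne_zero_of_mulVec_eq_smul {v : n → ℝ} {θ : ℝ} (hv : A *ᵥ v = θ • v)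
    (hv0 : v ≠ 0) {i₀ : n} (hne : ∀ i ≠ i₀, hA.eigenvalues i ≠ θ) : hA.eigenCoords v i₀ ≠ 0 := by
  intro h
  refine hv0 (hA.eigenCoords_injective ?_)
  ext i
  rw [show hA.eigenCoords 0 i = 0 by simp [eigenCoords]]
  obtain rfl | hi := eq_or_ne i i₀
  exacts [h, hA.eigenCoords_eq_zero_of_mulVec_eq_smul hv (hne i hi)]

lemma dotProduct_smul_one_sub_mulVec (θ : ℝ) (x : n → ℝ) :
    x ⬝ᵥ ((θ • 1 - A) *ᵥ x) = ∑ i, (θ - hA.eigenvalues i) * hA.eigenCoords x i ^ 2 := by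
  rw [sub_mulVec, smul_mulVec, one_mulVec, dotProduct_sub, dotProduct_smul,
    hA.dotProduct_mulVec_eq_sum, ← hA.eigenCoords_dotProduct_eigenCoords, dotProduct,
    Finset.smul_sum, ← Finset.sum_sub_distrib]
  exact Finset.sum_congr rfl fun i _ => by rw [smul_eq_mul]; ring

lemma posSemidef_smul_one_sub {θ : ℝ} (hθ : ∀ i, hA.eigenvalues i ≤ θ) :
    (θ • 1 - A).PosSemidef := by
  refine posSemidef_iff_dotProduct_mulVec.mpr ⟨hA.smul_one_sub θ, fun x => ?_⟩
  rw [star_trivial, hA.dotProduct_smul_one_sub_mulVec]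
  exact Finset.sum_nonneg fun i _ => mul_nonneg (sub_nonneg.mpr (hθ i)) (sq_nonneg _)

lemma mulVec_eq_smul_of_dotProduct_mulVec_eq {θ : ℝ} (hθ : ∀ i, hA.eigenvalues i ≤ θ)
    {x : n → ℝ} (hx : x ⬝ᵥ (A *ᵥ x) = θ * (x ⬝ᵥ x)) : A *ᵥ x = θ • x := by
  have h := ((hA.posSemidef_smul_one_sub hθ).dotProduct_mulVec_zero_iff x).mp (by
    rw [star_trivial, sub_mulVec, dotProduct_sub, hx, smul_mulVec, one_mulVec, dotProduct_smul,
      smul_eq_mul, sub_self])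
  rw [sub_mulVec, smul_mulVec, one_mulVec, sub_eq_zero] at h
  exact h.symm

lemma posSemidef_smul_one_sub_add_vecMulVec {v : n → ℝ} {θ μ : ℝ} (hv : A *ᵥ v = θ • v)
    (hv0 : v ≠ 0) (hμθ : μ < θ) (i₀ : n) (hμ : ∀ i ≠ i₀, hA.eigenvalues i ≤ μ) :
    (μ • 1 - A + ((θ - μ) / (v ⬝ᵥ v)) • vecMulVec v v).PosSemidef := by
  have hne : ∀ i ≠ i₀, hA.eigenvalues i ≠ θ := fun i hi => ((hμ i hi).trans_lt hμθ).ne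
  have hsum : ∀ w : n → ℝ, hA.eigenCoords v ⬝ᵥ w = hA.eigenCoords v i₀ * w i₀ := fun w =>
    Fintype.sum_eq_single i₀ fun i hi => by
      rw [hA.eigenCoords_eq_zero_of_mulVec_eq_smul hv (hne i hi), zero_mul]
  have hu0 := hA.eigenCoords_ne_zero_of_mulVec_eq_smul hv hv0 hne
  set u := hA.eigenCoords v
  have hθ : hA.eigenvalues i₀ = θ := by
    have h := hA.eigenCoords_mulVec v i₀
    rw [hv, eigenCoords, mulVec_smul, ← eigenCoords, Pi.smul_apply, smul_eq_mul] at h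
    exact (mul_right_cancel₀ hu0 h).symm
  have hJ : (vecMulVec v v).IsHermitian := by
    rw [IsHermitian, conjTranspose_vecMulVec, star_trivial]
  refine posSemidef_iff_dotProduct_mulVec.mpr
    ⟨(hA.smul_one_sub μ).add (hJ.smul (IsSelfAdjoint.all _)), fun x => ?_⟩
  rw [star_trivial, add_mulVec, dotProduct_add, hA.dotProduct_smul_one_sub_mulVec, smul_mulVec,
    vecMulVec_mulVec, dotProduct_smul, dotProduct_smul]
  set c := hA.eigenCoords x
  have hvx : v ⬝ᵥ x = u i₀ * c i₀ := by rw [← hA.eigenCoords_dotProduct_eigenCoords, hsum]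
  have hvv : v ⬝ᵥ v = u i₀ ^ 2 := by rw [← hA.eigenCoords_dotProduct_eigenCoords, hsum, sq]
  rw [op_smul_eq_smul, dotProduct_comm x, hvx, hvv, smul_eq_mul, smul_eq_mul,
    ← Finset.add_sum_erase _ _ (Finset.mem_univ i₀), hθ]
  have hrest : 0 ≤ ∑ i ∈ Finset.univ.erase i₀, (μ - hA.eigenvalues i) * c i ^ 2 :=
    Finset.sum_nonneg fun i hi =>
      mul_nonneg (sub_nonneg.mpr (hμ i (Finset.ne_of_mem_erase hi))) (sq_nonneg _)
  have hi₀ : (μ - θ) * c i₀ ^ 2 + (θ - μ) / u i₀ ^ 2 * (u i₀ * c i₀ * (u i₀ * c i₀)) = 0 := by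
    field_simp; ring
  linarith

lemma map_eigenvalues_eq_roots_charpoly :
    Finset.univ.val.map hA.eigenvalues = A.charpoly.roots := by
  simp [hA.roots_charpoly_eq_eigenvalues]

lemma trace_mul_self_eq_sum_eigenvalues_sq : (A * A).trace = ∑ i, hA.eigenvalues i ^ 2 := by
  conv_lhs => rw [hA.spectral_theorem, ← map_mul, Unitary.conjStarAlgAut_apply, trace_mul_cycle,
    Unitary.coe_star_mul_self, Matrix.one_mul, diagonal_mul_diagonal, trace_diagonal]
  simp [sq]

end Matrix.IsHermitian

section Indicator

variable {V : Type*} [Fintype V]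

lemma indicator_one_dotProduct (K : Finset V) (w : V → ℝ) :
    (K : Set V).indicator 1 ⬝ᵥ w = ∑ v ∈ K, w v := by
  classical
  simp [dotProduct, Set.indicator_apply, Finset.sum_ite_mem]

lemma one_dotProduct_indicator_one (K : Finset V) :
    1 ⬝ᵥ (K : Set V).indicator 1 = (K.card : ℝ) := by
  rw [dotProduct_comm, indicator_one_dotProduct]
  simp

end Indicator

namespace SimpleGraph

lemma IsClique.filter_adj_eq_erase {V : Type*} [DecidableEq V] {G : SimpleGraph V}
    [DecidableRel G.Adj] {K : Finset V} (hK : G.IsClique (K : Set V)) {v : V} (hv : v ∈ K) :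
    K.filter (G.Adj v) = K.erase v := by
  ext w
  simp only [Finset.mem_filter, Finset.mem_erase]
  exact ⟨fun ⟨hw, hvw⟩ => ⟨hvw.ne', hw⟩, fun ⟨hwv, hw⟩ => ⟨hw, hK hv hw hwv.symm⟩⟩

variable {V : Type*} [Fintype V] (G : SimpleGraph V) [DecidableRel G.Adj]

lemma one_dotProduct_adjMatrix_mulVec_one :
    1 ⬝ᵥ (G.adjMatrix ℝ *ᵥ 1) = (G.adjMatrix ℝ * G.adjMatrix ℝ).trace := by
  simp only [one_dotProduct, trace, diag_apply, adjMatrix_mul_self_apply_self,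
    adjMatrix_mulVec_apply, Pi.one_apply, Finset.sum_const, card_neighborFinset_eq_degree,
    nsmul_eq_mul, mul_one]

lemma adjMatrix_mulVec_indicator_one_apply (K : Finset V) (x : V) :
    (G.adjMatrix ℝ *ᵥ (K : Set V).indicator 1) x = (K.filter (G.Adj x)).card := by
  classical
  rw [adjMatrix_mulVec_apply]
  simp only [Set.indicator_apply, Finset.mem_coe, Pi.one_apply, Finset.sum_boole, Nat.cast_inj]
  congr 1
  ext y
  simp [and_comm]

variable [DecidableEq V]

lemma adjMatrix_mulVec_one_of_sum_eigenvalues_sq {θ : ℝ}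
    (hθ : ∀ i, (G.isHermitian_adjMatrix ℝ).eigenvalues i ≤ θ)
    (hsum : ∑ i, (G.isHermitian_adjMatrix ℝ).eigenvalues i ^ 2 = Fintype.card V * θ) :
    G.adjMatrix ℝ *ᵥ 1 = θ • 1 := by
  refine (G.isHermitian_adjMatrix ℝ).mulVec_eq_smul_of_dotProduct_mulVec_eq hθ ?_
  rw [one_dotProduct_adjMatrix_mulVec_one,
    (G.isHermitian_adjMatrix ℝ).trace_mul_self_eq_sum_eigenvalues_sq, hsum, one_dotProduct_one,
    mul_comm]

/-- The matrix behind Hoffman's ratio bound for independent sets of the complement of `G`. -/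
noncomputable def hoffmanMatrix (μ β : ℝ) : Matrix V V ℝ :=
  μ • 1 - G.adjMatrix ℝ + β • vecMulVec 1 1

variable {G} {c : ℕ} {K : Finset V}

lemma IsNClique.indicator_one_dotProduct_adjMatrix_mulVec (hK : G.IsNClique c K) :
    (K : Set V).indicator 1 ⬝ᵥ (G.adjMatrix ℝ *ᵥ (K : Set V).indicator 1) = c * (c - 1) := by
  have hK1 : ∀ v ∈ K, (G.adjMatrix ℝ *ᵥ (K : Set V).indicator 1) v = c - 1 := fun v hv => by
    rw [adjMatrix_mulVec_indicator_one_apply, hK.1.filter_adj_eq_erase hv,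
      Finset.card_erase_of_mem hv, hK.2, Nat.cast_pred (hK.2 ▸ Finset.card_pos.mpr ⟨v, hv⟩)]
  rw [indicator_one_dotProduct, Finset.sum_congr rfl hK1, Finset.sum_const, hK.2, nsmul_eq_mul]

lemma hoffmanMatrix_mulVec_indicator_one_apply (μ β : ℝ) (K : Finset V) (x : V) :
    (G.hoffmanMatrix μ β *ᵥ (K : Set V).indicator 1) x =
      μ * (K : Set V).indicator 1 x - (K.filter (G.Adj x)).card + β * K.card := by
  rw [hoffmanMatrix, add_mulVec, sub_mulVec, smul_mulVec, one_mulVec, smul_mulVec,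
    vecMulVec_mulVec, one_dotProduct_indicator_one, Pi.add_apply, Pi.sub_apply,
    adjMatrix_mulVec_indicator_one_apply]
  simp

lemma IsNClique.indicator_one_dotProduct_hoffmanMatrix_mulVec (hK : G.IsNClique c K) (μ β : ℝ) :
    (K : Set V).indicator 1 ⬝ᵥ (G.hoffmanMatrix μ β *ᵥ (K : Set V).indicator 1) =
      μ * c - c * (c - 1) + β * c ^ 2 := by
  rw [hoffmanMatrix, add_mulVec, sub_mulVec, dotProduct_add, dotProduct_sub,
    hK.indicator_one_dotProduct_adjMatrix_mulVec, smul_mulVec, smul_mulVec, one_mulVec,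
    vecMulVec_mulVec]
  simp [indicator_one_dotProduct, one_dotProduct_indicator_one, hK.2, sq, Set.indicator_apply,
    Finset.sum_ite_mem]

lemma IsNClique.le_of_posSemidef_hoffmanMatrix (hK : G.IsNClique c K) {μ β : ℝ}
    (hM : (G.hoffmanMatrix μ β).PosSemidef) : c * (c - 1) ≤ μ * c + β * c ^ 2 := by
  have h := hM.dotProduct_mulVec_nonneg ((K : Set V).indicator 1)
  rw [star_trivial, hK.indicator_one_dotProduct_hoffmanMatrix_mulVec] at h
  linarith

lemma IsNClique.card_filter_adj_of_posSemidef_hoffmanMatrix (hK : G.IsNClique c K) {μ β : ℝ}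
    (hM : (G.hoffmanMatrix μ β).PosSemidef) (heq : c * (c - 1) = μ * c + β * c ^ 2) {x : V}
    (hx : x ∉ K) : (K.filter (G.Adj x)).card = β * c := by
  have h := (hM.dotProduct_mulVec_zero_iff ((K : Set V).indicator 1)).mp (by
    rw [star_trivial, hK.indicator_one_dotProduct_hoffmanMatrix_mulVec]; linarith)
  have hMx := congrFun h x
  rw [hoffmanMatrix_mulVec_indicator_one_apply, Set.indicator_of_notMem (by simpa using hx),
    hK.2] at hMx
  simp only [mul_zero, zero_sub, Pi.zero_apply] at hMx
  linarith

end SimpleGraph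

/-- The spectrum of `cliqueExt 2 (gridGraph (t + 1))`. -/
noncomputable def cliqueExtGridSpectrum (t : ℕ) : Multiset ℝ :=
  {4 * (t : ℝ) + 1} + Multiset.replicate (2 * t) (2 * (t : ℝ) - 1) +
    Multiset.replicate ((t + 1) ^ 2) (-1) + Multiset.replicate (t ^ 2) (-3)

lemma roots_eq_cliqueExtGridSpectrum (t : ℕ) :
    ((X - C (4 * (t : ℝ) + 1)) * (X - C (2 * (t : ℝ) - 1)) ^ (2 * t) *
        (X + 1) ^ ((t + 1) ^ 2) * (X + 3) ^ (t ^ 2)).roots = cliqueExtGridSpectrum t := by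
  have h1 : (X + 1 : ℝ[X]) = X - C (-1) := by simp
  have h3 : (X + 3 : ℝ[X]) = X - C (-3) := by rw [map_neg, sub_neg_eq_add, map_ofNat]
  rw [h1, h3, roots_mul, roots_mul, roots_mul, roots_pow, roots_pow, roots_pow, roots_X_sub_C,
    roots_X_sub_C, roots_X_sub_C, roots_X_sub_C]
  · simp [cliqueExtGridSpectrum, Multiset.nsmul_singleton]
  all_goals simp only [ne_eq, mul_eq_zero, pow_eq_zero_iff', X_sub_C_ne_zero, false_and, or_self,
    not_false_eq_true]

lemma card_cliqueExtGridSpectrum (t : ℕ) :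
    Multiset.card (cliqueExtGridSpectrum t) = 2 * (t + 1) ^ 2 := by
  simp only [cliqueExtGridSpectrum, Multiset.card_add, Multiset.card_singleton,
    Multiset.card_replicate]
  ring

lemma sum_sq_cliqueExtGridSpectrum (t : ℕ) :
    ((cliqueExtGridSpectrum t).map (· ^ 2)).sum = 2 * ((t : ℝ) + 1) ^ 2 * (4 * t + 1) := by
  simp only [cliqueExtGridSpectrum, Multiset.map_add, Multiset.map_singleton,
    Multiset.map_replicate, Multiset.sum_add, Multiset.sum_singleton, Multiset.sum_replicate,
    nsmul_eq_mul]
  push_cast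
  ring

lemma count_cliqueExtGridSpectrum (t : ℕ) :
    (cliqueExtGridSpectrum t).count (4 * (t : ℝ) + 1) = 1 := by
  have ht : (0 : ℝ) ≤ t := t.cast_nonneg
  have h₁ : 2 * (t : ℝ) - 1 ≠ 4 * t + 1 := by linarith
  have h₂ : (-1 : ℝ) ≠ 4 * t + 1 := by linarith
  have h₃ : (-3 : ℝ) ≠ 4 * t + 1 := by linarith
  simp [cliqueExtGridSpectrum, Multiset.count_replicate, h₁, h₂, h₃]

lemma le_of_mem_cliqueExtGridSpectrum {t : ℕ} {x : ℝ} (hx : x ∈ cliqueExtGridSpectrum t)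
    (hne : x ≠ 4 * t + 1) : x ≤ 2 * t - 1 := by
  have : (0 : ℝ) ≤ t := t.cast_nonneg
  simp only [cliqueExtGridSpectrum, Multiset.mem_add, Multiset.mem_singleton,
    Multiset.mem_replicate] at hx
  rcases hx with ((h | h) | h) | h
  · exact absurd h hne
  all_goals linarith [h.2]

lemma Multiset.existsUnique_of_count_map_univ_eq_one {ι α : Type*} [Fintype ι] [DecidableEq α]
    {f : ι → α} {a : α} (h : (Finset.univ.val.map f).count a = 1) : ∃! i, f i = a := by
  rw [Multiset.count_map, ← Finset.filter_val, ← Finset.card_def] at h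
  obtain ⟨i₀, hi₀⟩ := Finset.card_eq_one.mp h
  refine ⟨i₀, ?_, fun i hi => ?_⟩
  · simpa [eq_comm] using hi₀.superset (Finset.mem_singleton_self i₀)
  · simpa using hi₀.subset (Finset.mem_filter.mpr ⟨Finset.mem_univ i, hi.symm⟩)

lemma SimpleGraph.posSemidef_hoffmanMatrix_of_charpoly_eq {V : Type*} [Fintype V] [DecidableEq V]
    (G : SimpleGraph V) [DecidableRel G.Adj] (t : ℕ)
    (hchar : (G.adjMatrix ℝ).charpoly =
      (X - C (4 * (t : ℝ) + 1)) * (X - C (2 * (t : ℝ) - 1)) ^ (2 * t) *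
        (X + 1) ^ ((t + 1) ^ 2) * (X + 3) ^ (t ^ 2)) :
    (G.hoffmanMatrix (2 * t - 1) (1 / (t + 1))).PosSemidef := by
  have hA := G.isHermitian_adjMatrix ℝ
  have hspec : Finset.univ.val.map hA.eigenvalues = cliqueExtGridSpectrum t := by
    rw [hA.map_eigenvalues_eq_roots_charpoly, hchar, roots_eq_cliqueExtGridSpectrum]
  have hn : (Fintype.card V : ℝ) = 2 * ((t : ℝ) + 1) ^ 2 := by
    have h := congrArg Multiset.card hspec
    rw [Multiset.card_map, card_cliqueExtGridSpectrum] at h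
    exact_mod_cast h
  have : Nonempty V := Fintype.card_pos_iff.mp (by
    have : (0 : ℝ) < Fintype.card V := by rw [hn]; positivity
    exact_mod_cast this)
  obtain ⟨i₀, hi₀, huniq⟩ := Multiset.existsUnique_of_count_map_univ_eq_one
    (hspec ▸ count_cliqueExtGridSpectrum t)
  have hsecond : ∀ i ≠ i₀, hA.eigenvalues i ≤ 2 * t - 1 := fun i hi =>
    le_of_mem_cliqueExtGridSpectrum (hspec ▸ Multiset.mem_map_of_mem _ (Finset.mem_univ_val i))
      fun h => hi (huniq i h)
  have hfirst : ∀ i, hA.eigenvalues i ≤ 4 * t + 1 := fun i => by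
    obtain rfl | hi := eq_or_ne i i₀
    exacts [hi₀.le, (hsecond i hi).trans (by linarith)]
  have hreg : G.adjMatrix ℝ *ᵥ 1 = (4 * (t : ℝ) + 1) • 1 := by
    refine G.adjMatrix_mulVec_one_of_sum_eigenvalues_sq hfirst ?_
    rw [hn, ← sum_sq_cliqueExtGridSpectrum, ← hspec, Multiset.map_map]
    rfl
  have h := hA.posSemidef_smul_one_sub_add_vecMulVec hreg one_ne_zero (by linarith) i₀ hsecond
  rwa [one_dotProduct_one, hn, show (4 * (t : ℝ) + 1 - (2 * t - 1)) / (2 * (t + 1) ^ 2) =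
    1 / (t + 1) by field_simp; ring] at h

/-- Let `t ≥ 1` and let `G` be a finite simple graph whose adjacency matrix has spectrum
`{(4t+1)^1, (2t−1)^{2t}, (−1)^{(t+1)^2}, (−3)^{t^2}}`. If `K` is a clique in `G` of order
`c`, then `c ≤ 2t+2`; moreover, if `c = 2t+2`, then every vertex of `G` outside `K` has
exactly `2` neighbors in `K`. -/
theorem stmt_10 (t : ℕ) (ht : 1 ≤ t) {V : Type*} [Fintype V] [DecidableEq V]
    (G : SimpleGraph V) [DecidableRel G.Adj]
    (hchar : (G.adjMatrix ℝ).charpoly =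
      (X - C (4 * (t : ℝ) + 1)) * (X - C (2 * (t : ℝ) - 1)) ^ (2 * t) *
        (X + 1) ^ ((t + 1) ^ 2) * (X + 3) ^ (t ^ 2))
    (c : ℕ) (K : Finset V) (hK : G.IsNClique c K) :
    c ≤ 2 * t + 2 ∧
      (c = 2 * t + 2 → ∀ x : V, x ∉ K → (K.filter (G.Adj x)).card = 2) := by
  have hM := G.posSemidef_hoffmanMatrix_of_charpoly_eq t hchar
  refine ⟨?_, fun hc x hx => ?_⟩
  · have h := hK.le_of_posSemidef_hoffmanMatrix hM
    have hc : (c : ℝ) ≤ 2 * t + 2 := by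
      have ht' : (1 : ℝ) ≤ t := by exact_mod_cast ht
      by_contra! hlt
      rw [div_mul_eq_mul_div, one_mul, ← sub_le_iff_le_add', le_div_iff₀ (by positivity)] at h
      nlinarith [mul_pos (mul_pos (by linarith : (0 : ℝ) < t) (by linarith : (0 : ℝ) < c))
        (sub_pos.mpr hlt)]
    exact_mod_cast hc
  · subst hc
    have h := hK.card_filter_adj_of_posSemidef_hoffmanMatrix hM (by push_cast; field_simp; ring) hx
    rw [show 1 / ((t : ℝ) + 1) * ((2 * t + 2 : ℕ) : ℝ) = 2 by push_cast; field_simp] at h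
    exact_mod_cast h
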